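/- arXiv:1509.04193 — 4 statements merged into one kernel-verified Lean document; each statement's English description precedes it below -/
import Mathlib

section
/- Let t > 0 and let f : ℤ² → ℝ satisfy f(i,j) = 0 whenever i ≤ 0 or j ≤ 0, together with the harmonicity relation Σ_{-1≤k,ℓ≤1} p_{k,ℓ} f(i+k, j+ℓ) = t·f(i,j) for all i, j ≥ 1. Then, as an identity of formal power series in the two variables x and y, one has L(x,y)·H(x,y) = L(x,0)·H(x,0) + L(0,y)·H(0,y) − L(0,0)·f(1,1), where H(x,y) = Σ_{i,j≥1} f(i,j) x^{i−1} y^{j−1}, H(x,0) = Σ_{i≥1} f(i,1) x^{i−1}, H(0,y) = Σ_{j≥1} f(1,j) y^{j−1}, and where L(x,0) = γ(x), L(0,y) = γ̃(y), L(0,0) = p_{1,1}. -/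
open Finset Filter

/-- Cyclic list of the eight neighbor weights
`p₁,₁, p₁,₀, p₁,₋₁, p₀,₋₁, p₋₁,₋₁, p₋₁,₀, p₋₁,₁, p₀,₁`. -/
def cyc (p : ℤ → ℤ → ℝ) : Fin 8 → ℝ :=
  ![p 1 1, p 1 0, p 1 (-1), p 0 (-1), p (-1) (-1), p (-1) 0, p (-1) 1, p 0 1]

/-- The Laplace transform `φ(a₁,a₂) = Σ p_{k,ℓ} e^{k a₁ + ℓ a₂}` (small steps case). -/
noncomputable def phi (p : ℤ → ℤ → ℝ) (a : ℝ × ℝ) : ℝ :=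
  ∑ k ∈ Finset.Icc (-1 : ℤ) 1, ∑ l ∈ Finset.Icc (-1 : ℤ) 1,
    p k l * Real.exp (k * a.1 + l * a.2)

/-- `f` is `t`-harmonic for the walk with weights `p` killed at the boundary of the quadrant:
(1) harmonicity in the interior, (2) positivity in the interior, (3) vanishing on the boundary
and the exterior of the quadrant. -/
def THarmonic (p : ℤ → ℤ → ℝ) (t : ℝ) (f : ℤ → ℤ → ℝ) : Prop :=
  (∀ i j : ℤ, 1 ≤ i → 1 ≤ j →
    ∑ k ∈ Finset.Icc (-1 : ℤ) 1, ∑ l ∈ Finset.Icc (-1 : ℤ) 1,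
      p k l * f (i + k) (j + l) = t * f i j) ∧
  (∀ i j : ℤ, 1 ≤ i → 1 ≤ j → 0 < f i j) ∧
  (∀ i j : ℤ, i ≤ 0 ∨ j ≤ 0 → f i j = 0)

/-- The exponent `(a, b)` as a finitely supported function on `Fin 2`,
representing the monomial `x^a y^b`. -/
noncomputable def expo (a b : ℕ) : Fin 2 →₀ ℕ := Finsupp.single 0 a + Finsupp.single 1 b

/-- `H(x,y) = Σ_{i,j ≥ 1} f(i,j) x^{i−1} y^{j−1}` as a formal power series. -/
noncomputable def Hxy (f : ℤ → ℤ → ℝ) : MvPowerSeries (Fin 2) ℝ :=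
  fun d => f ((d 0 : ℤ) + 1) ((d 1 : ℤ) + 1)

/-- `H(x,0) = Σ_{i ≥ 1} f(i,1) x^{i−1}` as a formal power series. -/
noncomputable def Hx0 (f : ℤ → ℤ → ℝ) : MvPowerSeries (Fin 2) ℝ :=
  fun d => if d 1 = 0 then f ((d 0 : ℤ) + 1) 1 else 0

/-- `H(0,y) = Σ_{j ≥ 1} f(1,j) y^{j−1}` as a formal power series. -/
noncomputable def H0y (f : ℤ → ℤ → ℝ) : MvPowerSeries (Fin 2) ℝ :=
  fun d => if d 0 = 0 then f 1 ((d 1 : ℤ) + 1) else 0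

/-- The kernel `L(x,y) = Σ_{k,ℓ} p_{k,ℓ} x^{1−k} y^{1−ℓ} − t·xy` as a formal power series. -/
noncomputable def LSer (p : ℤ → ℤ → ℝ) (t : ℝ) : MvPowerSeries (Fin 2) ℝ :=
  (∑ k ∈ Finset.Icc (-1 : ℤ) 1, ∑ l ∈ Finset.Icc (-1 : ℤ) 1,
    (MvPowerSeries.monomial (R := ℝ) (expo (1 - k).toNat (1 - l).toNat)) (p k l))
  - (MvPowerSeries.monomial (R := ℝ) (expo 1 1)) t

/-- `L(x,0) = γ(x) = p₋₁,₁x² + p₀,₁x + p₁,₁` as a formal power series. -/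
noncomputable def LSerX (p : ℤ → ℤ → ℝ) : MvPowerSeries (Fin 2) ℝ :=
  (MvPowerSeries.monomial (R := ℝ) (expo 2 0)) (p (-1) 1) +
  (MvPowerSeries.monomial (R := ℝ) (expo 1 0)) (p 0 1) +
  (MvPowerSeries.monomial (R := ℝ) (expo 0 0)) (p 1 1)

/-- `L(0,y) = γ̃(y) = p₁,₋₁y² + p₁,₀y + p₁,₁` as a formal power series. -/
noncomputable def LSerY (p : ℤ → ℤ → ℝ) : MvPowerSeries (Fin 2) ℝ :=
  (MvPowerSeries.monomial (R := ℝ) (expo 0 2)) (p 1 (-1)) +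
  (MvPowerSeries.monomial (R := ℝ) (expo 0 1)) (p 1 0) +
  (MvPowerSeries.monomial (R := ℝ) (expo 0 0)) (p 1 1)


open MvPowerSeries

/-!
Multiplying by the monomial `x^{1-k} y^{1-ℓ}` shifts the coefficients of `H` so that the
coefficient of `x^{i} y^{j}` in `L(x,y) H(x,y)` is `Σ p_{k,ℓ} f(i+k, j+ℓ) − t f(i,j)`, once `f` is
extended by zero outside the quadrant. For `i, j ≥ 1` this vanishes by harmonicity; on the
axes `i = 0` or `j = 0` only the steps staying in the quadrant survive, and these are exactly the
coefficients of `L(x,0) H(x,0)` and `L(0,y) H(0,y)`, with the origin counted twice.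
-/

lemma sum_Icc_neg_one_one {M : Type*} [AddCommMonoid M] (g : ℤ → M) :
    ∑ k ∈ Icc (-1 : ℤ) 1, g k = g (-1) + g 0 + g 1 := by
  rw [show Icc (-1 : ℤ) 1 = {-1, 0, 1} by decide, sum_insert (by decide),
    sum_insert (by decide), sum_singleton, add_assoc]

lemma expo_le_iff {a b : ℕ} {d : Fin 2 →₀ ℕ} : expo a b ≤ d ↔ a ≤ d 0 ∧ b ≤ d 1 := by
  simp [Finsupp.le_def, Fin.forall_fin_two, expo]

lemma coeff_monomial_expo_mul_Hxy {g : ℤ → ℤ → ℝ} (hg : ∀ i j : ℤ, i ≤ 0 ∨ j ≤ 0 → g i j = 0)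
    (a b : ℕ) (c : ℝ) (d : Fin 2 →₀ ℕ) :
    coeff d (monomial (expo a b) c * Hxy g) = c * g ((d 0 : ℤ) + 1 - a) ((d 1 : ℤ) + 1 - b) := by
  rw [coeff_monomial_mul]
  split_ifs with h <;> rw [expo_le_iff] at h
  · have h0 : ((d - expo a b) 0 : ℤ) = d 0 - a := by simp [expo]; omega
    have h1 : ((d - expo a b) 1 : ℤ) = d 1 - b := by simp [expo]; omega
    simp only [Hxy, coeff_apply, h0, h1]
    ring_nf
  · rw [hg _ _ (by omega), mul_zero]

lemma Hx0_eq_Hxy (f : ℤ → ℤ → ℝ) : Hx0 f = Hxy fun i j => if j = 1 then f i 1 else 0 := by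
  ext d
  simp [Hx0, Hxy, coeff_apply]

lemma H0y_eq_Hxy (f : ℤ → ℤ → ℝ) : H0y f = Hxy fun i j => if i = 1 then f 1 j else 0 := by
  ext d
  simp [H0y, Hxy, coeff_apply]

section coefficients

variable {f : ℤ → ℤ → ℝ} (hf : ∀ i j : ℤ, i ≤ 0 ∨ j ≤ 0 → f i j = 0)
include hf

lemma coeff_LSer_mul_Hxy (p : ℤ → ℤ → ℝ) (t : ℝ) (d : Fin 2 →₀ ℕ) :
    coeff d (LSer p t * Hxy f) =
      ∑ k ∈ Icc (-1 : ℤ) 1, ∑ l ∈ Icc (-1 : ℤ) 1, p k l * f (d 0 + k) (d 1 + l)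
        - t * f (d 0) (d 1) := by
  have shift : ∀ k ∈ Icc (-1 : ℤ) 1, ((1 - k).toNat : ℤ) = 1 - k := fun k hk =>
    Int.toNat_of_nonneg (by linarith [(mem_Icc.mp hk).2])
  simp only [LSer, sub_mul, sum_mul, map_sub, map_sum, coeff_monomial_expo_mul_Hxy hf]
  congr 1
  · refine sum_congr rfl fun k hk => sum_congr rfl fun l hl => ?_
    rw [shift k hk, shift l hl]
    ring_nf
  · simp

lemma coeff_LSerX_mul_Hx0 (p : ℤ → ℤ → ℝ) (d : Fin 2 →₀ ℕ) :
    coeff d (LSerX p * Hx0 f) =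
      if d 1 = 0 then p (-1) 1 * f (d 0 - 1) 1 + p 0 1 * f (d 0) 1 + p 1 1 * f (d 0 + 1) 1
      else 0 := by
  have hg : ∀ i j : ℤ, i ≤ 0 ∨ j ≤ 0 → (if j = 1 then f i 1 else 0) = 0 := by
    intro i j hij
    split_ifs with hj
    · exact hf i 1 (by omega)
    · rfl
  simp only [LSerX, Hx0_eq_Hxy, add_mul, map_add, coeff_monomial_expo_mul_Hxy hg]
  have h2 : (d 0 : ℤ) + 1 - 2 = d 0 - 1 := by ring
  by_cases h : d 1 = 0 <;> simp [h, h2]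

lemma coeff_LSerY_mul_H0y (p : ℤ → ℤ → ℝ) (d : Fin 2 →₀ ℕ) :
    coeff d (LSerY p * H0y f) =
      if d 0 = 0 then p 1 (-1) * f 1 (d 1 - 1) + p 1 0 * f 1 (d 1) + p 1 1 * f 1 (d 1 + 1)
      else 0 := by
  have hg : ∀ i j : ℤ, i ≤ 0 ∨ j ≤ 0 → (if i = 1 then f 1 j else 0) = 0 := by
    intro i j hij
    split_ifs with hi
    · exact hf 1 j (by omega)
    · rfl
  simp only [LSerY, H0y_eq_Hxy, add_mul, map_add, coeff_monomial_expo_mul_Hxy hg]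
  have h2 : (d 1 : ℤ) + 1 - 2 = d 1 - 1 := by ring
  by_cases h : d 0 = 0 <;> simp [h, h2]

end coefficients

theorem functional_equation_general (p : ℤ → ℤ → ℝ)
    (t : ℝ)
    (f : ℤ → ℤ → ℝ)
    (hbdry : ∀ i j : ℤ, i ≤ 0 ∨ j ≤ 0 → f i j = 0)
    (hharm : ∀ i j : ℤ, 1 ≤ i → 1 ≤ j →
      ∑ k ∈ Finset.Icc (-1 : ℤ) 1, ∑ l ∈ Finset.Icc (-1 : ℤ) 1,
        p k l * f (i + k) (j + l) = t * f i j) :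
    LSer p t * Hxy f =
      LSerX p * Hx0 f + LSerY p * H0y f -
        MvPowerSeries.C (σ := Fin 2) (R := ℝ) (p 1 1 * f 1 1) := by
  ext d
  rw [map_sub, map_add, coeff_LSer_mul_Hxy hbdry, coeff_LSerX_mul_Hx0 hbdry,
    coeff_LSerY_mul_H0y hbdry, coeff_C]
  simp only [Finsupp.ext_iff, Fin.forall_fin_two, Finsupp.coe_zero, Pi.zero_apply]
  have axis_zero : ∀ i j : ℤ, (i = -1 ∨ i = 0 ∨ j = -1 ∨ j = 0) → f i j = 0 :=
    fun i j h => hbdry i j (by omega)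
  by_cases interior : d 0 ≠ 0 ∧ d 1 ≠ 0
  · obtain ⟨h0, h1⟩ := interior
    simp only [h0, h1, and_false, if_false, sub_zero, add_zero]
    rw [hharm _ _ (by omega) (by omega), sub_self]
  · rcases not_and_or.mp interior with h | h <;> rw [not_not] at h <;>
      simp [h, sum_Icc_neg_one_one, axis_zero, ← sub_eq_add_neg]

/-- the fundamental functional equation
`L(x,y)H(x,y) = L(x,0)H(x,0) + L(0,y)H(0,y) − L(0,0)f(1,1)`
as an identity of formal power series in two variables. -/
theorem functional_equation (p : ℤ → ℤ → ℝ)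
    (hpos : ∀ k l : ℤ, 0 ≤ p k l)
    (hsum : ∑ k ∈ Finset.Icc (-1 : ℤ) 1, ∑ l ∈ Finset.Icc (-1 : ℤ) 1, p k l = 1)
    (hp00 : p 0 0 = 0)
    (hsmall : ∀ k l : ℤ, (1 < |k| ∨ 1 < |l|) → p k l = 0)
    (hnz : ∀ i : Fin 8, cyc p i ≠ 0 ∨ cyc p (i + 1) ≠ 0 ∨ cyc p (i + 2) ≠ 0)
    (t : ℝ) (ht : 0 < t)
    (f : ℤ → ℤ → ℝ)
    (hbdry : ∀ i j : ℤ, i ≤ 0 ∨ j ≤ 0 → f i j = 0)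
    (hharm : ∀ i j : ℤ, 1 ≤ i → 1 ≤ j →
      ∑ k ∈ Finset.Icc (-1 : ℤ) 1, ∑ l ∈ Finset.Icc (-1 : ℤ) 1,
        p k l * f (i + k) (j + l) = t * f i j) :
    LSer p t * Hxy f =
      LSerX p * Hx0 f + LSerY p * H0y f -
        MvPowerSeries.C (σ := Fin 2) (R := ℝ) (p 1 1 * f 1 1) :=
  functional_equation_general p t f hbdry hharm
end

section
/- Under assumptions (a) and (b), the function φ(a₁,a₂) = Σ_{k,ℓ} p_{k,ℓ} e^{k a₁ + ℓ a₂} is strictly convex on ℝ² and attains a global minimum at a unique point of ℝ². -/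
open Finset Filter

/-!
`φ` is a nonnegative combination of the exponentials `a ↦ exp ⟨v, a⟩` over the eight steps `v`.
By (b), for every direction `d` some step `v` of positive weight satisfies `⟨v, d⟩ ≥ ‖d‖∞ / 2`:
the three consecutive steps around the one closest in angle to `d` all do. Along the line through
two distinct points this `exp ⟨v, ·⟩` is strictly convex, so `φ` is strictly convex, and
`φ a ≥ q exp (‖a‖∞ / 2)` with `q` the least positive weight, so `φ` is coercive. A continuous
coercive function on `ℝ²` attains its minimum, and strict convexity makes the minimiser unique.
-/

open Real

noncomputable def expSum {E ι : Type*} [NormedAddCommGroup E] [NormedSpace ℝ E]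
    (s : Finset ι) (c : ι → ℝ) (ℓ : ι → StrongDual ℝ E) (x : E) : ℝ :=
  ∑ i ∈ s, c i * exp (ℓ i x)

namespace expSum

variable {E ι : Type*} [NormedAddCommGroup E] [NormedSpace ℝ E]
  {s : Finset ι} {c : ι → ℝ} {ℓ : ι → StrongDual ℝ E}

theorem continuous : Continuous (expSum s c ℓ) := by
  unfold expSum; fun_prop

theorem strictConvexOn (hc : ∀ i ∈ s, 0 ≤ c i)
    (hsep : ∀ x y, x ≠ y → ∃ i ∈ s, 0 < c i ∧ ℓ i x ≠ ℓ i y) :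
    StrictConvexOn ℝ Set.univ (expSum s c ℓ) := by
  refine ⟨convex_univ, fun x _ y _ hxy a b ha hb hab => ?_⟩
  have hmap : ∀ i, ℓ i (a • x + b • y) = a • ℓ i x + b • ℓ i y := fun i => by simp
  simp only [expSum, hmap, smul_eq_mul, mul_sum, ← sum_add_distrib]
  obtain ⟨i₀, hi₀, hc₀, hne⟩ := hsep x y hxy
  refine sum_lt_sum (fun i hi => ?_) ⟨i₀, hi₀, ?_⟩
  · calc c i * exp (a * ℓ i x + b * ℓ i y)
        ≤ c i * (a * exp (ℓ i x) + b * exp (ℓ i y)) := by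
          refine mul_le_mul_of_nonneg_left ?_ (hc i hi)
          simpa only [smul_eq_mul] using
            convexOn_exp.2 (Set.mem_univ _) (Set.mem_univ _) ha.le hb.le hab
      _ = _ := by ring
  · calc c i₀ * exp (a * ℓ i₀ x + b * ℓ i₀ y)
        < c i₀ * (a * exp (ℓ i₀ x) + b * exp (ℓ i₀ y)) := by
          gcongr
          simpa only [smul_eq_mul] using
            strictConvexOn_exp.2 (Set.mem_univ _) (Set.mem_univ _) hne ha hb hab
      _ = _ := by ring

variable {δ : ℝ}

theorem exists_pos_apply_ne (hδ : 0 < δ) (hgrow : ∀ z, ∃ i ∈ s, 0 < c i ∧ δ * ‖z‖ ≤ ℓ i z)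
    {x y : E} (hxy : x ≠ y) : ∃ i ∈ s, 0 < c i ∧ ℓ i x ≠ ℓ i y := by
  obtain ⟨i, hi, hci, hle⟩ := hgrow (x - y)
  have : 0 < ℓ i (x - y) := hle.trans_lt' (by positivity [sub_ne_zero.2 hxy])
  exact ⟨i, hi, hci, fun h => by simp [h] at this⟩

theorem tendsto_cocompact [ProperSpace E] (hc : ∀ i ∈ s, 0 ≤ c i) (hδ : 0 < δ)
    (hgrow : ∀ z, ∃ i ∈ s, 0 < c i ∧ δ * ‖z‖ ≤ ℓ i z) :
    Tendsto (expSum s c ℓ) (cocompact E) atTop := by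
  obtain ⟨i₀, hi₀, hc₀, -⟩ := hgrow 0
  have hne : (s.filter (0 < c ·)).Nonempty := ⟨i₀, mem_filter.2 ⟨hi₀, hc₀⟩⟩
  set q := (s.filter (0 < c ·)).inf' hne c
  have hq : 0 < q := (lt_inf'_iff hne).2 fun i hi => (mem_filter.1 hi).2
  have hbound : ∀ z, q * exp (δ * ‖z‖) ≤ expSum s c ℓ z := by
    intro z
    obtain ⟨i, hi, hci, hle⟩ := hgrow z
    calc q * exp (δ * ‖z‖) ≤ c i * exp (ℓ i z) := by
          gcongr
          exact inf'_le _ (mem_filter.2 ⟨hi, hci⟩)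
      _ ≤ expSum s c ℓ z :=
          single_le_sum (f := fun i => c i * exp (ℓ i z))
            (fun j hj => mul_nonneg (hc j hj) (exp_pos _).le) hi
  have hexp : Tendsto (fun t => q * exp (δ * t)) atTop atTop :=
    (tendsto_exp_atTop.comp (tendsto_id.const_mul_atTop hδ)).const_mul_atTop hq
  exact tendsto_atTop_mono hbound (hexp.comp tendsto_norm_cocompact_atTop)

end expSum

theorem StrictConvexOn.existsUnique_forall_le {E : Type*} [NormedAddCommGroup E]
    [NormedSpace ℝ E] [ProperSpace E] {f : E → ℝ} (hf : StrictConvexOn ℝ Set.univ f)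
    (hcont : Continuous f) (hlim : Tendsto f (cocompact E) atTop) :
    ∃! a, ∀ b, f a ≤ f b := by
  obtain ⟨a, ha⟩ := hcont.exists_forall_le hlim
  exact ⟨a, ha, fun b hb => hf.eq_of_isMinOn (fun x _ => hb x) (fun x _ => ha x)
    (Set.mem_univ _) (Set.mem_univ _)⟩

-- The steps `(stepX j, stepY j)` are listed in the cyclic order of `cyc`.
def stepX : Fin 8 → ℝ := ![1, 1, 1, 0, -1, -1, -1, 0]
def stepY : Fin 8 → ℝ := ![1, 0, -1, -1, -1, 0, 1, 1]

def stepDual (j : Fin 8) : StrongDual ℝ (ℝ × ℝ) :=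
  stepX j • ContinuousLinearMap.fst ℝ ℝ ℝ + stepY j • ContinuousLinearMap.snd ℝ ℝ ℝ

@[simp] theorem stepDual_apply (j : Fin 8) (a : ℝ × ℝ) :
    stepDual j a = stepX j * a.1 + stepY j * a.2 := rfl

theorem phi_eq_expSum {p : ℤ → ℤ → ℝ} (hp00 : p 0 0 = 0) :
    phi p = expSum univ (cyc p) stepDual := by
  ext a
  have hIcc : Icc (-1 : ℤ) 1 = {-1, 0, 1} := rfl
  simp [phi, expSum, hIcc, hp00, Fin.sum_univ_eight, cyc, stepX, stepY]
  ring_nf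

theorem half_max_abs_le_iff {x y e : ℝ} :
    max |x| |y| / 2 ≤ e ↔ (x ≤ 2 * e ∧ -x ≤ 2 * e) ∧ (y ≤ 2 * e ∧ -y ≤ 2 * e) := by
  rw [div_le_iff₀ two_pos, max_le_iff, abs_le', abs_le', mul_comm]

theorem exists_consecutive_steps_half_max_abs_le (x y : ℝ) : ∃ i : Fin 8,
    max |x| |y| / 2 ≤ stepX i * x + stepY i * y ∧
    max |x| |y| / 2 ≤ stepX (i + 1) * x + stepY (i + 1) * y ∧
    max |x| |y| / 2 ≤ stepX (i + 2) * x + stepY (i + 2) * y := by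
  -- the middle step of the chosen window is the step closest in angle to `(x, y)`
  refine ⟨if 2 * |y| ≤ |x| then (if 0 ≤ x then 0 else 4)
    else if 2 * |x| ≤ |y| then (if 0 ≤ y then 6 else 2)
    else if 0 ≤ x then (if 0 ≤ y then 7 else 1) else (if 0 ≤ y then 5 else 3), ?_⟩
  simp only [half_max_abs_le_iff]
  rcases abs_cases x with ⟨hx, hx₀⟩ | ⟨hx, hx₀⟩ <;>
    rcases abs_cases y with ⟨hy, hy₀⟩ | ⟨hy, hy₀⟩ <;>
    simp only [hx, hy] <;> split_ifs <;>
    simp only [stepX, stepY, Fin.reduceAdd, Matrix.cons_val] <;>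
    refine ⟨⟨⟨?_, ?_⟩, ?_, ?_⟩, ⟨⟨?_, ?_⟩, ?_, ?_⟩, ⟨⟨?_, ?_⟩, ?_, ?_⟩⟩ <;> linarith

theorem cyc_nonneg {p : ℤ → ℤ → ℝ} (hpos : ∀ k l, 0 ≤ p k l) (j : Fin 8) : 0 ≤ cyc p j := by
  fin_cases j <;> exact hpos _ _

theorem exists_cyc_pos_half_norm_le {p : ℤ → ℤ → ℝ} (hpos : ∀ k l, 0 ≤ p k l)
    (hnz : ∀ i : Fin 8, cyc p i ≠ 0 ∨ cyc p (i + 1) ≠ 0 ∨ cyc p (i + 2) ≠ 0) (z : ℝ × ℝ) :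
    ∃ j ∈ univ, 0 < cyc p j ∧ 1 / 2 * ‖z‖ ≤ stepDual j z := by
  have hnorm : 1 / 2 * ‖z‖ = max |z.1| |z.2| / 2 := by
    rw [Prod.norm_def, Real.norm_eq_abs, Real.norm_eq_abs]; ring
  obtain ⟨i, h₀, h₁, h₂⟩ := exists_consecutive_steps_half_max_abs_le z.1 z.2
  have hpos' : ∀ j, cyc p j ≠ 0 → 0 < cyc p j := fun j h => (cyc_nonneg hpos j).lt_of_ne' h
  rcases hnz i with h | h | h
  exacts [⟨_, mem_univ _, hpos' _ h, hnorm ▸ h₀⟩, ⟨_, mem_univ _, hpos' _ h, hnorm ▸ h₁⟩,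
    ⟨_, mem_univ _, hpos' _ h, hnorm ▸ h₂⟩]

theorem phi_strictConvexOn_and_unique_global_min_general (p : ℤ → ℤ → ℝ)
    (hpos : ∀ k l : ℤ, 0 ≤ p k l)
    (hp00 : p 0 0 = 0)
    (hnz : ∀ i : Fin 8, cyc p i ≠ 0 ∨ cyc p (i + 1) ≠ 0 ∨ cyc p (i + 2) ≠ 0) :
    StrictConvexOn ℝ Set.univ (phi p) ∧
    ∃! a : ℝ × ℝ, ∀ b : ℝ × ℝ, phi p a ≤ phi p b := by
  have hc : ∀ j ∈ univ, 0 ≤ cyc p j := fun j _ => cyc_nonneg hpos j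
  have hgrow := exists_cyc_pos_half_norm_le hpos hnz
  have hsc : StrictConvexOn ℝ Set.univ (phi p) := by
    rw [phi_eq_expSum hp00]
    exact expSum.strictConvexOn hc fun x y => expSum.exists_pos_apply_ne one_half_pos hgrow
  refine ⟨hsc, hsc.existsUnique_forall_le ?_ ?_⟩ <;> rw [phi_eq_expSum hp00]
  exacts [expSum.continuous, expSum.tendsto_cocompact hc one_half_pos hgrow]

/-- under assumptions (a) and (b), `φ` is strictly convex on `ℝ²` and attains a
global minimum at a unique point of `ℝ²`. -/
theorem phi_strictConvexOn_and_unique_global_min (p : ℤ → ℤ → ℝ)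
    (hpos : ∀ k l : ℤ, 0 ≤ p k l)
    (hsum : ∑ k ∈ Finset.Icc (-1 : ℤ) 1, ∑ l ∈ Finset.Icc (-1 : ℤ) 1, p k l = 1)
    (hp00 : p 0 0 = 0)
    (hsmall : ∀ k l : ℤ, (1 < |k| ∨ 1 < |l|) → p k l = 0)
    (hnz : ∀ i : Fin 8, cyc p i ≠ 0 ∨ cyc p (i + 1) ≠ 0 ∨ cyc p (i + 2) ≠ 0) :
    StrictConvexOn ℝ Set.univ (phi p) ∧
    ∃! a : ℝ × ℝ, ∀ b : ℝ × ℝ, phi p a ≤ phi p b :=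
  phi_strictConvexOn_and_unique_global_min_general p hpos hp00 hnz
end

section
/- Let t > 0 and let p, p′ > 0 satisfy p_{1,0}/p + p_{-1,0}·p + p_{0,1}/p′ + p_{0,-1}·p′ = t, together with p² < p_{1,0}/p_{-1,0} and p′² < p_{0,1}/p_{0,-1}. Then the function f_p defined by f_p(i,j) = ((1/p)^i − (p_{-1,0}·p/p_{1,0})^i)·((1/p′)^j − (p_{0,-1}·p′/p_{0,1})^j) for i, j ≥ 1, and f_p(i,j) = 0 whenever i ≤ 0 or j ≤ 0, is a t-harmonic function: it satisfies conditions (1), (2) and (3). -/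
/-!
On each axis, `x ↦ x ^ i` is an eigenfunction of `g ↦ P g(i+1) + Q g(i-1)` with eigenvalue `c`
exactly when `x` is a root of `P x² - c x + Q`. For `c = P/p + Q p` the two roots are `1/p` and
`Q p / P`, so their difference of powers is an eigenfunction vanishing at `0`; it is positive for
`i ≥ 1` because `p² < P/Q` makes `1/p` the larger root. A product of two such functions, one per
coordinate, is an eigenfunction of the two-dimensional walk with the sum of the eigenvalues, and
vanishing at `0` on each axis lets it be cut off to zero outside the quadrant.
-/

/-- `f` is `t`-harmonic for the simple random walk with weights
`p₁,₀, p₋₁,₀, p₀,₁, p₀,₋₁` killed at the boundary of the quadrant. -/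
def THarmSimple (p10 pm10 p01 p0m1 t : ℝ) (f : ℤ → ℤ → ℝ) : Prop :=
  (∀ i j : ℤ, 1 ≤ i → 1 ≤ j →
    p10 * f (i + 1) j + pm10 * f (i - 1) j + p01 * f i (j + 1) + p0m1 * f i (j - 1)
      = t * f i j) ∧
  (∀ i j : ℤ, 1 ≤ i → 1 ≤ j → 0 < f i j) ∧
  (∀ i j : ℤ, i ≤ 0 ∨ j ≤ 0 → f i j = 0)

def quadrantProduct (g h : ℤ → ℝ) (i j : ℤ) : ℝ :=
  if 1 ≤ i ∧ 1 ≤ j then g i * h j else 0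

lemma quadrantProduct_eq_mul {g h : ℤ → ℝ} (hg : g 0 = 0) (hh : h 0 = 0) {i j : ℤ}
    (hi : 0 ≤ i) (hj : 0 ≤ j) : quadrantProduct g h i j = g i * h j := by
  unfold quadrantProduct
  split_ifs with hij
  · rfl
  · rcases not_and_or.mp hij with hi' | hj'
    · rw [show i = 0 by omega, hg, zero_mul]
    · rw [show j = 0 by omega, hh, mul_zero]

lemma tHarmSimple_quadrantProduct {p10 pm10 p01 p0m1 r s : ℝ} {g h : ℤ → ℝ}
    (hg0 : g 0 = 0) (hh0 : h 0 = 0)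
    (hg : ∀ i, 1 ≤ i → p10 * g (i + 1) + pm10 * g (i - 1) = r * g i)
    (hh : ∀ j, 1 ≤ j → p01 * h (j + 1) + p0m1 * h (j - 1) = s * h j)
    (hg_pos : ∀ i, 1 ≤ i → 0 < g i) (hh_pos : ∀ j, 1 ≤ j → 0 < h j) :
    THarmSimple p10 pm10 p01 p0m1 (r + s) (quadrantProduct g h) := by
  refine ⟨fun i j hi hj => ?_, fun i j hi hj => ?_, fun i j hij => ?_⟩
  · simp only [quadrantProduct_eq_mul hg0 hh0 (i := i) (j := j) (by omega) (by omega),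
      quadrantProduct_eq_mul hg0 hh0 (i := i + 1) (j := j) (by omega) (by omega),
      quadrantProduct_eq_mul hg0 hh0 (i := i - 1) (j := j) (by omega) (by omega),
      quadrantProduct_eq_mul hg0 hh0 (i := i) (j := j + 1) (by omega) (by omega),
      quadrantProduct_eq_mul hg0 hh0 (i := i) (j := j - 1) (by omega) (by omega)]
    linear_combination h j * hg i hi + g i * hh j hj
  · rw [quadrantProduct, if_pos ⟨hi, hj⟩]
    exact mul_pos (hg_pos i hi) (hh_pos j hj)
  · rw [quadrantProduct, if_neg (by omega)]

lemma zpow_recurrence_of_root {P Q c x : ℝ} (hx : x ≠ 0) (hroot : P * x ^ 2 + Q = c * x)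
    (i : ℤ) : P * x ^ (i + 1) + Q * x ^ (i - 1) = c * x ^ i := by
  have hsucc : x ^ (i + 1) = x ^ (i - 1) * x ^ 2 := by
    rw [← zpow_natCast, ← zpow_add₀ hx]; ring_nf
  have hself : x ^ i = x ^ (i - 1) * x := by
    rw [← zpow_add_one₀ hx]; ring_nf
  rw [hsucc, hself]
  linear_combination x ^ (i - 1) * hroot

lemma zpow_sub_zpow_recurrence {P Q p : ℝ} (hP : P ≠ 0) (hQ : Q ≠ 0) (hp : p ≠ 0) (i : ℤ) :
    P * ((1 / p) ^ (i + 1) - (Q * p / P) ^ (i + 1))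
        + Q * ((1 / p) ^ (i - 1) - (Q * p / P) ^ (i - 1))
      = (P / p + Q * p) * ((1 / p) ^ i - (Q * p / P) ^ i) := by
  have hroot₁ : P * (1 / p) ^ 2 + Q = (P / p + Q * p) * (1 / p) := by
    field_simp
  have hroot₂ : P * (Q * p / P) ^ 2 + Q = (P / p + Q * p) * (Q * p / P) := by
    field_simp; ring
  linear_combination zpow_recurrence_of_root (by positivity) hroot₁ i
    - zpow_recurrence_of_root (by positivity) hroot₂ i

lemma zpow_sub_zpow_pos {P Q p : ℝ} (hP : 0 < P) (hQ : 0 < Q) (hp : 0 < p)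
    (hlt : p ^ 2 < P / Q) {i : ℤ} (hi : 1 ≤ i) : 0 < (1 / p) ^ i - (Q * p / P) ^ i := by
  have hroots : Q * p / P < 1 / p := by
    rw [div_lt_div_iff₀ hP hp]
    nlinarith [(lt_div_iff₀ hQ).mp hlt]
  exact sub_pos.mpr (zpow_lt_zpow_left₀ (by omega) (by positivity) hroots)

theorem simple_walk_product_tHarmonic_general
    (p10 pm10 p01 p0m1 : ℝ)
    (h1 : 0 < p10) (h2 : 0 < pm10) (h3 : 0 < p01) (h4 : 0 < p0m1)
    (t : ℝ)
    (pp pp' : ℝ) (hpp : 0 < pp) (hpp' : 0 < pp')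
    (heq : p10 / pp + pm10 * pp + p01 / pp' + p0m1 * pp' = t)
    (hlt : pp ^ 2 < p10 / pm10) (hlt' : pp' ^ 2 < p01 / p0m1) :
    THarmSimple p10 pm10 p01 p0m1 t (fun i j =>
      if 1 ≤ i ∧ 1 ≤ j then
        ((1 / pp) ^ i - (pm10 * pp / p10) ^ i) * ((1 / pp') ^ j - (p0m1 * pp' / p01) ^ j)
      else 0) := by
  rw [← heq, add_assoc _ (p01 / pp')]
  exact tHarmSimple_quadrantProduct (by simp) (by simp)
    (fun i _ => zpow_sub_zpow_recurrence h1.ne' h2.ne' hpp.ne' i)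
    (fun j _ => zpow_sub_zpow_recurrence h3.ne' h4.ne' hpp'.ne' j)
    (fun _ => zpow_sub_zpow_pos h1 h2 hpp hlt) (fun _ => zpow_sub_zpow_pos h3 h4 hpp' hlt')

/-- the product form `f_p(i,j) = ((1/p)^i − (p₋₁,₀p/p₁,₀)^i)((1/p′)^j −
(p₀,₋₁p′/p₀,₁)^j)` is a `t`-harmonic function for the simple random walk, whenever
`p₁,₀/p + p₋₁,₀p + p₀,₁/p′ + p₀,₋₁p′ = t`, `p² < p₁,₀/p₋₁,₀` and `p′² < p₀,₁/p₀,₋₁`. -/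
theorem simple_walk_product_tHarmonic
    (p10 pm10 p01 p0m1 : ℝ)
    (h1 : 0 < p10) (h2 : 0 < pm10) (h3 : 0 < p01) (h4 : 0 < p0m1)
    (hsum : p10 + pm10 + p01 + p0m1 = 1)
    (t : ℝ) (ht : 0 < t)
    (pp pp' : ℝ) (hpp : 0 < pp) (hpp' : 0 < pp')
    (heq : p10 / pp + pm10 * pp + p01 / pp' + p0m1 * pp' = t)
    (hlt : pp ^ 2 < p10 / pm10) (hlt' : pp' ^ 2 < p01 / p0m1) :
    THarmSimple p10 pm10 p01 p0m1 t (fun i j =>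
      if 1 ≤ i ∧ 1 ≤ j then
        ((1 / pp) ^ i - (pm10 * pp / p10) ^ i) * ((1 / pp') ^ j - (p0m1 * pp' / p01) ^ j)
      else 0) :=
  simple_walk_product_tHarmonic_general p10 pm10 p01 p0m1 h1 h2 h3 h4 t pp pp' hpp hpp' heq hlt hlt'
end

section
/- Let t > 0. (i) If p, p′ > 0 satisfy p′² = p_{0,1}/p_{0,-1}, p² < p_{1,0}/p_{-1,0}, and p_{1,0}/p + p_{-1,0}·p + 2√(p_{0,1}·p_{0,-1}) = t, then the function f defined by f(i,j) = ((1/p)^i − (p_{-1,0}·p/p_{1,0})^i)·j·(1/p′)^j for i, j ≥ 1 and f(i,j) = 0 whenever i ≤ 0 or j ≤ 0 is a t-harmonic function. (ii) Symmetrically, if p, p′ > 0 satisfy p² = p_{1,0}/p_{-1,0}, p′² < p_{0,1}/p_{0,-1}, and 2√(p_{1,0}·p_{-1,0}) + p_{0,1}/p′ + p_{0,-1}·p′ = t, then the function f defined by f(i,j) = i·(1/p)^i·((1/p′)^j − (p_{0,-1}·p′/p_{0,1})^j) for i, j ≥ 1 and f(i,j) = 0 whenever i ≤ 0 or j ≤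 0 is a t-harmonic function. -/
def IsWalkEigenfunction (p q s : ℝ) (u : ℤ → ℝ) : Prop :=
  ∀ i : ℤ, p * u (i + 1) + q * u (i - 1) = s * u i

section Eigenfunctions

variable {p q : ℝ}

lemma isWalkEigenfunction_zpow_sub_zpow {a b : ℝ} (ha : a ≠ 0) (hb : b ≠ 0)
    (hab : p * a + q * a⁻¹ = p * b + q * b⁻¹) :
    IsWalkEigenfunction p q (p * a + q * a⁻¹) (fun i => a ^ i - b ^ i) := by
  intro i
  dsimp only
  rw [zpow_add_one₀ ha, zpow_add_one₀ hb, zpow_sub_one₀ ha, zpow_sub_one₀ hb]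
  linear_combination b ^ i * hab

lemma isWalkEigenfunction_intCast_mul_zpow {c : ℝ} (hc : c ≠ 0) (hpq : p * c = q * c⁻¹) :
    IsWalkEigenfunction p q (p * c + q * c⁻¹) (fun i => (i : ℝ) * c ^ i) := by
  intro i
  dsimp only
  rw [zpow_add_one₀ hc, zpow_sub_one₀ hc]
  push_cast
  linear_combination c ^ i * hpq

-- `1 / ρ` and `q ρ / p` are the two roots of `p x + q / x = p / ρ + q ρ`.
lemma isWalkEigenfunction_two_roots (hp : 0 < p) (hq : 0 < q) {ρ : ℝ} (hρ : 0 < ρ) :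
    IsWalkEigenfunction p q (p / ρ + q * ρ) (fun i => (1 / ρ) ^ i - (q * ρ / p) ^ i) := by
  have hroots : p * (1 / ρ) + q * (1 / ρ)⁻¹ = p * (q * ρ / p) + q * (q * ρ / p)⁻¹ := by
    field_simp
    ring
  have hs : p / ρ + q * ρ = p * (1 / ρ) + q * (1 / ρ)⁻¹ := by
    field_simp
  rw [hs]
  exact isWalkEigenfunction_zpow_sub_zpow (by positivity) (by positivity) hroots

lemma zpow_two_roots_pos (hp : 0 < p) (hq : 0 < q) {ρ : ℝ} (hρ : 0 < ρ) (hρp : ρ ^ 2 < p / q)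
    {i : ℤ} (hi : 1 ≤ i) : 0 < (1 / ρ) ^ i - (q * ρ / p) ^ i := by
  have hlt : q * ρ / p < 1 / ρ := by
    rw [div_lt_div_iff₀ hp hρ]
    nlinarith [(lt_div_iff₀ hq).mp hρp]
  exact sub_pos.mpr (zpow_lt_zpow_left₀ (by omega) (by positivity) hlt)

lemma isWalkEigenfunction_double_root (hq : 0 < q) {ρ : ℝ} (hρ : 0 < ρ) (hρp : ρ ^ 2 = p / q) :
    IsWalkEigenfunction p q (2 * √(p * q)) (fun i => (i : ℝ) * (1 / ρ) ^ i) := by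
  have hp : p = q * ρ ^ 2 := by
    rw [hρp]
    field_simp
  have hdouble : p * (1 / ρ) = q * (1 / ρ)⁻¹ := by
    rw [hp]
    field_simp
  have hsqrt : √(p * q) = q * ρ := by
    rw [hp, show q * ρ ^ 2 * q = (q * ρ) ^ 2 by ring, Real.sqrt_sq (by positivity)]
  have hs : 2 * √(p * q) = p * (1 / ρ) + q * (1 / ρ)⁻¹ := by
    rw [hdouble, hsqrt]
    field_simp
    ring
  rw [hs]
  exact isWalkEigenfunction_intCast_mul_zpow (by positivity) hdouble

end Eigenfunctions

lemma tHarmSimple_of_isWalkEigenfunction {p10 pm10 p01 p0m1 s r : ℝ} {u v : ℤ → ℝ}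
    (hu : IsWalkEigenfunction p10 pm10 s u) (hv : IsWalkEigenfunction p01 p0m1 r v)
    (hu0 : u 0 = 0) (hv0 : v 0 = 0)
    (hu_pos : ∀ i, 1 ≤ i → 0 < u i) (hv_pos : ∀ j, 1 ≤ j → 0 < v j) :
    THarmSimple p10 pm10 p01 p0m1 (s + r)
      (fun i j => if 1 ≤ i ∧ 1 ≤ j then u i * v j else 0) := by
  have hext : ∀ i j : ℤ, 0 ≤ i → 0 ≤ j →
      (if 1 ≤ i ∧ 1 ≤ j then u i * v j else 0) = u i * v j := by
    intro i j hi hj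
    split_ifs
    · rfl
    · rcases (by omega : i = 0 ∨ j = 0) with rfl | rfl <;> simp [hu0, hv0]
  refine ⟨fun i j hi hj => ?_, fun i j hi hj => ?_, fun i j h => ?_⟩
  · simp only [hext _ _ (by omega : 0 ≤ i + 1) (by omega : 0 ≤ j),
      hext _ _ (by omega : 0 ≤ i - 1) (by omega : 0 ≤ j),
      hext _ _ (by omega : 0 ≤ i) (by omega : 0 ≤ j + 1),
      hext _ _ (by omega : 0 ≤ i) (by omega : 0 ≤ j - 1),
      hext _ _ (by omega : 0 ≤ i) (by omega : 0 ≤ j)]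
    linear_combination v j * hu i + u i * hv j
  · simpa [hi, hj] using mul_pos (hu_pos i hi) (hv_pos j hj)
  · simp only [if_neg (by omega : ¬(1 ≤ i ∧ 1 ≤ j))]

theorem simple_walk_degenerate_tHarmonic_general
    (p10 pm10 p01 p0m1 : ℝ)
    (h1 : 0 < p10) (h2 : 0 < pm10) (h3 : 0 < p01) (h4 : 0 < p0m1)
    (t : ℝ) :
    (∀ pp pp' : ℝ, 0 < pp → 0 < pp' →
      pp' ^ 2 = p01 / p0m1 → pp ^ 2 < p10 / pm10 →
      p10 / pp + pm10 * pp + 2 * Real.sqrt (p01 * p0m1) = t →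
      THarmSimple p10 pm10 p01 p0m1 t (fun i j =>
        if 1 ≤ i ∧ 1 ≤ j then
          ((1 / pp) ^ i - (pm10 * pp / p10) ^ i) * ((j : ℝ) * (1 / pp') ^ j)
        else 0)) ∧
    (∀ pp pp' : ℝ, 0 < pp → 0 < pp' →
      pp ^ 2 = p10 / pm10 → pp' ^ 2 < p01 / p0m1 →
      2 * Real.sqrt (p10 * pm10) + p01 / pp' + p0m1 * pp' = t →
      THarmSimple p10 pm10 p01 p0m1 t (fun i j =>
        if 1 ≤ i ∧ 1 ≤ j then
          ((i : ℝ) * (1 / pp) ^ i) * ((1 / pp') ^ j - (p0m1 * pp' / p01) ^ j)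
        else 0)) := by
  have linear_zpow_pos : ∀ {ρ : ℝ}, 0 < ρ → ∀ i : ℤ, 1 ≤ i → 0 < (i : ℝ) * (1 / ρ) ^ i :=
    fun hρ i hi => mul_pos (by exact_mod_cast hi) (by positivity)
  constructor
  · rintro pp pp' hpp hpp' hpp'_sq hpp_lt rfl
    exact tHarmSimple_of_isWalkEigenfunction (isWalkEigenfunction_two_roots h1 h2 hpp)
      (isWalkEigenfunction_double_root h4 hpp' hpp'_sq) (by simp) (by simp)
      (fun i hi => zpow_two_roots_pos h1 h2 hpp hpp_lt hi) (linear_zpow_pos hpp')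
  · rintro pp pp' hpp hpp' hpp_sq hpp'_lt rfl
    rw [add_assoc]
    exact tHarmSimple_of_isWalkEigenfunction (isWalkEigenfunction_double_root h2 hpp hpp_sq)
      (isWalkEigenfunction_two_roots h3 h4 hpp') (by simp) (by simp) (linear_zpow_pos hpp)
      (fun j hj => zpow_two_roots_pos h3 h4 hpp' hpp'_lt hj)

/-- the two degenerate forms (with a linear factor `j(1/p′)^j`, resp.
`i(1/p)^i`) are `t`-harmonic functions for the simple random walk. -/
theorem simple_walk_degenerate_tHarmonic
    (p10 pm10 p01 p0m1 : ℝ)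
    (h1 : 0 < p10) (h2 : 0 < pm10) (h3 : 0 < p01) (h4 : 0 < p0m1)
    (hsum : p10 + pm10 + p01 + p0m1 = 1)
    (t : ℝ) (ht : 0 < t) :
    (∀ pp pp' : ℝ, 0 < pp → 0 < pp' →
      pp' ^ 2 = p01 / p0m1 → pp ^ 2 < p10 / pm10 →
      p10 / pp + pm10 * pp + 2 * Real.sqrt (p01 * p0m1) = t →
      THarmSimple p10 pm10 p01 p0m1 t (fun i j =>
        if 1 ≤ i ∧ 1 ≤ j then
          ((1 / pp) ^ i - (pm10 * pp / p10) ^ i) * ((j : ℝ) * (1 / pp') ^ j)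
        else 0)) ∧
    (∀ pp pp' : ℝ, 0 < pp → 0 < pp' →
      pp ^ 2 = p10 / pm10 → pp' ^ 2 < p01 / p0m1 →
      2 * Real.sqrt (p10 * pm10) + p01 / pp' + p0m1 * pp' = t →
      THarmSimple p10 pm10 p01 p0m1 t (fun i j =>
        if 1 ≤ i ∧ 1 ≤ j then
          ((i : ℝ) * (1 / pp) ^ i) * ((1 / pp') ^ j - (p0m1 * pp' / p01) ^ j)
        else 0)) :=
  simple_walk_degenerate_tHarmonic_general p10 pm10 p01 p0m1 h1 h2 h3 h4 t
end
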